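/- Let T be a string over an alphabet Σ, let q be a positive integer with 2q ≤ |T|, and let p = per(T[0..2q)), assuming p ≤ q. Let b be an integer with 2q ≤ b < |T| such that T[i] = T[i mod p] for all i with b−2q < i < b, and T[b] ≠ T[b mod p]. Then per(T(b−2q..b]) > q, where T(b−2q..b] denotes the fragment T[b−2q+1..b+1) of length 2q. -/
import Mathlib


/-- `p` is a period of `X` if `p > 0` and `X[i] = X[i+p]` for all `i ∈ [0..|X|-p)`. -/
def IsPeriod {α : Type*} (X : List α) (p : ℕ) : Prop :=
  0 < p ∧ ∀ i, i + p < X.length → X[i]? = X[i + p]?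

/-- `per X` is the smallest period of `X`. -/
noncomputable def per {α : Type*} (X : List α) : ℕ :=
  sInf {p | IsPeriod X p}

/-- `Occ P T` is the set of positions `ℓ` with `T[ℓ..ℓ+|P|) = P`. -/
def Occ {α : Type*} (P T : List α) : Set ℕ :=
  {ℓ | (T.drop ℓ).take P.length = P}

lemma per_isPeriod {α : Type*} (X : List α) (h : 0 < X.length) : IsPeriod X (per X) := by
  have hne : X.length ∈ {p | IsPeriod X p} := ⟨h, fun i hi => absurd hi (by omega)⟩
  exact Nat.sInf_mem ⟨X.length, hne⟩

theorem stmt16 {α : Type*} (T : List α) (q : ℕ) (hq : 0 < q) (hlen : 2 * q ≤ T.length)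
    (p : ℕ) (hp : p = per (T.take (2 * q))) (hpq : p ≤ q)
    (b : ℕ) (hb1 : 2 * q ≤ b) (hb2 : b < T.length)
    (hcompat : ∀ i, b - 2 * q < i → i < b → T[i]? = T[i % p]?)
    (hmis : T[b]? ≠ T[b % p]?) :
    q < per ((T.drop (b + 1 - 2 * q)).take (2 * q)) := by
  -- p > 0
  have hp0 : 0 < p := by
    have := per_isPeriod (T.take (2 * q)) (by simp; omega)
    rw [← hp] at this
    exact this.1
  set s := b + 1 - 2 * q with hs
  set X := (T.drop s).take (2 * q) with hX
  have hXlen : X.length = 2 * q := by simp [hX]; omega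
  -- index lemma
  have hidx : ∀ j, j < 2 * q → X[j]? = T[s + j]? := by
    intro j hj
    rw [hX, List.getElem?_take, if_pos hj, List.getElem?_drop]
  -- the period of X
  have hper := per_isPeriod X (by omega)
  set r := per X with hr
  obtain ⟨hr0, hrper⟩ := hper
  by_contra hcon
  push_neg at hcon
  have hrq : r ≤ q := hcon
  -- T[b] = T[b - r]
  have h1 : T[b - r]? = T[b]? := by
    have := hrper (2 * q - 1 - r) (by rw [hXlen]; omega)
    rw [hidx _ (by omega), hidx _ (by omega)] at this
    have e1 : s + (2 * q - 1 - r) = b - r := by omega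
    have e2 : s + (2 * q - 1 - r + r) = b := by omega
    rw [e1, e2] at this
    exact this
  -- T[b - r] = T[(b - r) % p]
  have h2 : T[b - r]? = T[(b - r) % p]? := hcompat (b - r) (by omega) (by omega)
  -- key: T[(b - r) % p] = T[b % p]
  have h3 : T[(b - r) % p]? = T[b % p]? := by
    by_cases hc : p + r < 2 * q
    · -- use i = b - r - p
      have hcomp_i : T[b - r - p]? = T[(b - r - p) % p]? :=
        hcompat (b - r - p) (by omega) (by omega)
      have hmod1 : (b - r - p) % p = (b - r) % p := by
        have : p ≤ b - r := by omega
        rw [Nat.mod_eq_sub_mod this]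
      have hstep := hrper (2 * q - 1 - r - p) (by rw [hXlen]; omega)
      rw [hidx _ (by omega), hidx _ (by omega)] at hstep
      have e1 : s + (2 * q - 1 - r - p) = b - r - p := by omega
      have e2 : s + (2 * q - 1 - r - p + r) = b - p := by omega
      rw [e1, e2] at hstep
      have hcomp_bp : T[b - p]? = T[(b - p) % p]? := hcompat (b - p) (by omega) (by omega)
      have hmod2 : (b - p) % p = b % p := by
        have : p ≤ b := by omega
        rw [Nat.mod_eq_sub_mod this]
      calc T[(b - r) % p]? = T[(b - r - p) % p]? := by rw [hmod1]
        _ = T[b - r - p]? := hcomp_i.symm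
        _ = T[b - p]? := hstep
        _ = T[(b - p) % p]? := hcomp_bp
        _ = T[b % p]? := by rw [hmod2]
    · -- p = r = q
      have hrp : r = p := by omega
      have : (b - r) % p = b % p := by
        rw [hrp]
        have : p ≤ b := by omega
        rw [Nat.mod_eq_sub_mod this]
      rw [this]
  exact hmis (h1.symm.trans (h2.trans h3))
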